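/- For all real numbers 0 < m ≤ M < ∞ and all γ ≥ 2, there exists a constant C ≥ 0 such that for all a with m ≤ a ≤ M and all b ≥ -a, one has (γ-1)·a^(γ-2)·b² ≤ (a+b)^γ - a^γ - γ·a^(γ-1)·b ≤ C·(1 + |b|^(γ-2))·b². -/

import Mathlib

/-!
With `φ t = (a + t b) ^ γ`, the Taylor integral formula gives
`(a + b)^γ - a^γ - γ a^(γ-1) b = γ (γ-1) b² ∫₀¹ (1 - t) (a + t b)^(γ-2) dt`.
Since `a + t b ≥ (1 - t) a`, the integrand dominates `a^(γ-2) (1 - t)^(γ-1)`, whose integral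
`a^(γ-2) / γ` gives the lower bound. For the upper bound, `0 ≤ a + t b ≤ M + |b|` and
`(M + |b|)^(γ-2) ≤ 2^(γ-2) (M^(γ-2) + |b|^(γ-2))`.
-/

open Real

theorem sub_sub_deriv_eq_integral_one_sub_mul {φ φ' φ'' : ℝ → ℝ}
    (hφ : ∀ t, HasDerivAt φ (φ' t) t) (hφ' : ∀ t, HasDerivAt φ' (φ'' t) t)
    (hφ'' : IntervalIntegrable φ'' MeasureTheory.volume 0 1) :
    φ 1 - φ 0 - φ' 0 = ∫ t in (0:ℝ)..1, (1 - t) * φ'' t := by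
  have hF : ∀ t, HasDerivAt (fun t => φ t + (1 - t) * φ' t) ((1 - t) * φ'' t) t := fun t =>
    ((hφ t).add (((hasDerivAt_id t).const_sub 1).mul (hφ' t))).congr_deriv (by simp)
  rw [intervalIntegral.integral_eq_sub_of_hasDerivAt (fun t _ => hF t)
    (hφ''.continuousOn_mul (by fun_prop))]
  ring

theorem continuous_add_mul_rpow {p : ℝ} (hp : 0 ≤ p) (a b : ℝ) :
    Continuous fun t => (a + t * b) ^ p :=
  (continuous_const.add (continuous_id.mul continuous_const)).rpow_const fun _ => Or.inr hp

theorem rpow_sub_rpow_sub_mul_eq_integral {γ : ℝ} (hγ : 2 ≤ γ) (a b : ℝ) :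
    (a + b) ^ γ - a ^ γ - γ * a ^ (γ - 1) * b =
      ∫ t in (0:ℝ)..1, (1 - t) * (γ * (γ - 1) * (a + t * b) ^ (γ - 2) * b ^ 2) := by
  have hu : ∀ t : ℝ, HasDerivAt (fun t => a + t * b) b t := fun t => by
    simpa using ((hasDerivAt_id t).mul_const b).const_add a
  have hφ : ∀ t : ℝ, HasDerivAt (fun t => (a + t * b) ^ γ) (γ * (a + t * b) ^ (γ - 1) * b) t :=
    fun t => ((hu t).rpow_const (Or.inr (by linarith))).congr_deriv (by ring)
  have hφ' : ∀ t : ℝ, HasDerivAt (fun t => γ * (a + t * b) ^ (γ - 1) * b)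
      (γ * (γ - 1) * (a + t * b) ^ (γ - 2) * b ^ 2) t := fun t =>
    ((((hu t).rpow_const (p := γ - 1) (Or.inr (by linarith))).const_mul γ).mul_const b).congr_deriv
      (by rw [show γ - 1 - 1 = γ - 2 by ring]; ring)
  have hcont := continuous_add_mul_rpow (p := γ - 2) (by linarith) a b
  simpa using sub_sub_deriv_eq_integral_one_sub_mul hφ hφ'
    ((by fun_prop : Continuous _).intervalIntegrable 0 1)

theorem integral_one_sub_rpow {p : ℝ} (hp : -1 < p) :
    ∫ t in (0:ℝ)..1, (1 - t) ^ p = 1 / (p + 1) := by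
  rw [intervalIntegral.integral_comp_sub_left (fun s => s ^ p) 1, sub_self, sub_zero,
    integral_rpow (Or.inl hp), one_rpow, zero_rpow (by linarith)]
  ring

theorem add_rpow_le_two_rpow_mul_rpow_add_rpow {x y p : ℝ} (hx : 0 ≤ x) (hy : 0 ≤ y)
    (hp : 0 ≤ p) : (x + y) ^ p ≤ 2 ^ p * (x ^ p + y ^ p) := calc
  (x + y) ^ p ≤ (2 * max x y) ^ p := by
    rw [two_mul]; gcongr; exacts [le_max_left _ _, le_max_right _ _]
  _ = 2 ^ p * max x y ^ p := mul_rpow zero_le_two (le_max_of_le_left hx)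
  _ ≤ 2 ^ p * (x ^ p + y ^ p) := by
    gcongr
    rcases le_total x y with h | h
    · rw [max_eq_right h]; linarith [rpow_nonneg hx p]
    · rw [max_eq_left h]; linarith [rpow_nonneg hy p]

theorem one_sub_mul_le_add_mul {a b t : ℝ} (hab : 0 ≤ a + b) (ht : t ∈ Set.Icc (0:ℝ) 1) :
    (1 - t) * a ≤ a + t * b := by
  nlinarith [ht.1]

theorem mul_rpow_mul_sq_le_rpow_sub_rpow_sub_mul {γ a b : ℝ} (hγ : 2 ≤ γ) (ha : 0 ≤ a)
    (hab : 0 ≤ a + b) :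
    (γ - 1) * a ^ (γ - 2) * b ^ 2 ≤ (a + b) ^ γ - a ^ γ - γ * a ^ (γ - 1) * b := by
  have hγ1 : 0 ≤ γ - 1 := by linarith
  have hle : ∀ t ∈ Set.Icc (0:ℝ) 1, γ * ((γ - 1) * a ^ (γ - 2) * b ^ 2) * (1 - t) ^ (γ - 1) ≤
      (1 - t) * (γ * (γ - 1) * (a + t * b) ^ (γ - 2) * b ^ 2) := fun t ht => by
    have h1t : 0 ≤ 1 - t := by linarith [ht.2]
    have hpow : (1 - t) ^ (γ - 2) * a ^ (γ - 2) ≤ (a + t * b) ^ (γ - 2) := by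
      rw [← mul_rpow h1t ha]
      exact rpow_le_rpow (by positivity) (one_sub_mul_le_add_mul hab ht) (by linarith)
    calc γ * ((γ - 1) * a ^ (γ - 2) * b ^ 2) * (1 - t) ^ (γ - 1)
        = (1 - t) * (γ * (γ - 1) * b ^ 2) * ((1 - t) ^ (γ - 2) * a ^ (γ - 2)) := by
          rw [show γ - 1 = γ - 2 + 1 by ring, rpow_add_one' h1t (by linarith)]; ring
      _ ≤ (1 - t) * (γ * (γ - 1) * b ^ 2) * (a + t * b) ^ (γ - 2) := by gcongr
      _ = (1 - t) * (γ * (γ - 1) * (a + t * b) ^ (γ - 2) * b ^ 2) := by ring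
  have hcont := continuous_add_mul_rpow (p := γ - 2) (by linarith) a b
  calc (γ - 1) * a ^ (γ - 2) * b ^ 2
      = ∫ t in (0:ℝ)..1, γ * ((γ - 1) * a ^ (γ - 2) * b ^ 2) * (1 - t) ^ (γ - 1) := by
        rw [intervalIntegral.integral_const_mul, integral_one_sub_rpow (by linarith),
          sub_add_cancel]
        field_simp
    _ ≤ ∫ t in (0:ℝ)..1, (1 - t) * (γ * (γ - 1) * (a + t * b) ^ (γ - 2) * b ^ 2) :=
        intervalIntegral.integral_mono_on zero_le_one
          ((by fun_prop : Continuous _).intervalIntegrable 0 1)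
          ((by fun_prop : Continuous _).intervalIntegrable 0 1) hle
    _ = _ := (rpow_sub_rpow_sub_mul_eq_integral hγ a b).symm

theorem rpow_sub_rpow_sub_mul_le {γ a b B : ℝ} (hγ : 2 ≤ γ)
    (hB : ∀ t ∈ Set.Icc (0:ℝ) 1, (a + t * b) ^ (γ - 2) ≤ B) :
    (a + b) ^ γ - a ^ γ - γ * a ^ (γ - 1) * b ≤ γ * (γ - 1) / 2 * B * b ^ 2 := by
  have hle : ∀ t ∈ Set.Icc (0:ℝ) 1, (1 - t) * (γ * (γ - 1) * (a + t * b) ^ (γ - 2) * b ^ 2) ≤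
      (1 - t) * (γ * (γ - 1) * B * b ^ 2) := fun t ht => by
    have : 0 ≤ 1 - t := by linarith [ht.2]
    have : 0 ≤ γ - 1 := by linarith
    gcongr
    exact hB t ht
  have hcont := continuous_add_mul_rpow (p := γ - 2) (by linarith) a b
  calc (a + b) ^ γ - a ^ γ - γ * a ^ (γ - 1) * b
      = ∫ t in (0:ℝ)..1, (1 - t) * (γ * (γ - 1) * (a + t * b) ^ (γ - 2) * b ^ 2) :=
        rpow_sub_rpow_sub_mul_eq_integral hγ a b
    _ ≤ ∫ t in (0:ℝ)..1, (1 - t) * (γ * (γ - 1) * B * b ^ 2) :=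
        intervalIntegral.integral_mono_on zero_le_one
          ((by fun_prop : Continuous _).intervalIntegrable 0 1)
          ((by fun_prop : Continuous _).intervalIntegrable 0 1) hle
    _ = γ * (γ - 1) / 2 * B * b ^ 2 := by
        rw [intervalIntegral.integral_mul_const, intervalIntegral.integral_sub
          intervalIntegrable_const intervalIntegral.intervalIntegrable_id, integral_id]
        norm_num
        ring

theorem add_mul_rpow_le {p a b M t : ℝ} (hp : 0 ≤ p) (ha : 0 ≤ a) (haM : a ≤ M)
    (hab : 0 ≤ a + b) (ht : t ∈ Set.Icc (0:ℝ) 1) :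
    (a + t * b) ^ p ≤ 2 ^ p * max 1 (M ^ p) * (1 + |b| ^ p) := by
  have htb : t * b ≤ |b| := calc
    t * b ≤ |t * b| := le_abs_self _
    _ = t * |b| := by rw [abs_mul, abs_of_nonneg ht.1]
    _ ≤ |b| := mul_le_of_le_one_left (abs_nonneg b) ht.2
  have hM : M ^ p + |b| ^ p ≤ max 1 (M ^ p) * (1 + |b| ^ p) := by
    nlinarith [le_max_left 1 (M ^ p), le_max_right 1 (M ^ p), rpow_nonneg (abs_nonneg b) p]
  calc (a + t * b) ^ p
      ≤ (M + |b|) ^ p :=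
        rpow_le_rpow (le_trans (by nlinarith [ht.1, ht.2]) (one_sub_mul_le_add_mul hab ht))
          (by linarith) hp
    _ ≤ 2 ^ p * (M ^ p + |b| ^ p) :=
        add_rpow_le_two_rpow_mul_rpow_add_rpow (ha.trans haM) (abs_nonneg b) hp
    _ ≤ 2 ^ p * max 1 (M ^ p) * (1 + |b| ^ p) := by
        rw [mul_assoc]; gcongr

theorem stmt0_general (m M γ : ℝ) (hm : 0 < m) (hγ : 2 ≤ γ) :
    ∃ C : ℝ, 0 ≤ C ∧ ∀ a b : ℝ, m ≤ a → a ≤ M → -a ≤ b →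
      (γ - 1) * a ^ (γ - 2) * b ^ 2 ≤ (a + b) ^ γ - a ^ γ - γ * a ^ (γ - 1) * b ∧
      (a + b) ^ γ - a ^ γ - γ * a ^ (γ - 1) * b ≤ C * (1 + |b| ^ (γ - 2)) * b ^ 2 := by
  have hγ1 : 0 ≤ γ - 1 := by linarith
  refine ⟨γ * (γ - 1) / 2 * (2 ^ (γ - 2) * max 1 (M ^ (γ - 2))), by positivity, ?_⟩
  intro a b ha haM hab
  have ha0 : 0 ≤ a := hm.le.trans ha
  have hab0 : 0 ≤ a + b := by linarith
  refine ⟨mul_rpow_mul_sq_le_rpow_sub_rpow_sub_mul hγ ha0 hab0, ?_⟩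
  calc (a + b) ^ γ - a ^ γ - γ * a ^ (γ - 1) * b
      ≤ γ * (γ - 1) / 2 * (2 ^ (γ - 2) * max 1 (M ^ (γ - 2)) * (1 + |b| ^ (γ - 2))) * b ^ 2 :=
        rpow_sub_rpow_sub_mul_le hγ fun t ht =>
          add_mul_rpow_le (by linarith) ha0 haM hab0 ht
    _ = _ := by ring

/-- For all real numbers `0 < m ≤ M` and all `γ ≥ 2`, there exists `C ≥ 0` such that
for all `a` with `m ≤ a ≤ M` and all `b ≥ -a`,
`(γ-1)·a^(γ-2)·b² ≤ (a+b)^γ - a^γ - γ·a^(γ-1)·b ≤ C·(1 + |b|^(γ-2))·b²`. -/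
theorem stmt0 (m M γ : ℝ) (hm : 0 < m) (hmM : m ≤ M) (hγ : 2 ≤ γ) :
    ∃ C : ℝ, 0 ≤ C ∧ ∀ a b : ℝ, m ≤ a → a ≤ M → -a ≤ b →
      (γ - 1) * a ^ (γ - 2) * b ^ 2 ≤ (a + b) ^ γ - a ^ γ - γ * a ^ (γ - 1) * b ∧
      (a + b) ^ γ - a ^ γ - γ * a ^ (γ - 1) * b ≤ C * (1 + |b| ^ (γ - 2)) * b ^ 2 :=
  stmt0_general m M γ hm hγ
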